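/- arXiv:0910.4120 — 2 statements merged into one kernel-verified Lean document; each statement's English description precedes it below -/
import Mathlib

section
/- For all u ∈ (0,1] and v ∈ [0,1] one has V(u,v) ≤ 8uv(1 + log(1/u)). -/
open Real Set

noncomputable section

/-- The Fourier coefficient `a_{m,n} = (32/π⁴) · 1/((2m+1)(2n+1)) · 1/((2m+1)² + (2n+1)²)`. -/
def Vcoef (m n : ℕ) : ℝ :=
  32 / Real.pi ^ 4 * (1 / ((2 * m + 1) * (2 * n + 1)))
    * (1 / ((2 * (m:ℝ) + 1) ^ 2 + (2 * (n:ℝ) + 1) ^ 2))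

/-- The `(m,n)` term of the double Fourier series defining `V`. -/
def Vterm (u v : ℝ) (m n : ℕ) : ℝ :=
  Vcoef m n * Real.sin ((2 * m + 1) * Real.pi * u) * Real.sin ((2 * n + 1) * Real.pi * v)

/-- `V(u,v) = Σ_m Σ_n a_{m,n} sin((2m+1)πu) sin((2n+1)πv)`. -/
def V (u v : ℝ) : ℝ := ∑' m : ℕ, ∑' n : ℕ, Vterm u v m n

/-!
Termwise, `|sin ((2m+1)πu)| ≤ ((2m+1)πu)^(1-δ)` and `|sin ((2n+1)πv)| ≤ (2n+1)πv`. Telescoping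
against `arctan` bounds the row sums `∑ₙ 1/((2m+1)² + (2n+1)²)` by `3π/(8(2m+1))`, and
telescoping against `x ↦ x^(-δ)` gives `∑ₘ (2m+1)^(-1-δ) ≤ 1 + 1/(2δ)`. Hence
`V(u,v) ≤ (12/π²)(1 + 1/(2δ))(πu)^(1-δ) v` for every `δ ∈ (0,1]`. If `πu ≥ e⁻¹`, `δ = 1` gives
`V ≤ 2v`, and `u(1 + log(1/u))` is increasing, so it is at least its value `≥ 1/4` at `e⁻¹/π`.
Otherwise `δ = 1/log(1/(πu))` makes `(πu)^(-δ) = e`, and `1 + 1/(2δ)` is linear in `log(1/u)`.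
-/

open Finset

lemma abs_sin_le_rpow {x θ : ℝ} (hx : 0 < x) (h0 : 0 ≤ θ) (h1 : θ ≤ 1) : |sin x| ≤ x ^ θ := by
  rcases le_total x 1 with h | h
  · calc |sin x| ≤ |x| := abs_sin_le_abs
      _ = x ^ (1 : ℝ) := by rw [abs_of_pos hx, rpow_one]
      _ ≤ x ^ θ := rpow_le_rpow_of_exponent_ge hx h h1
  · exact (abs_sin_le_one x).trans (one_le_rpow h h0)

lemma div_one_add_sq_le_arctan_sub {a b : ℝ} (hab : a ≤ b) (hba : -b ≤ a) :
    (b - a) / (1 + b ^ 2) ≤ arctan b - arctan a := by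
  have hderiv : ∀ x ∈ interior (Icc a b), 1 / (1 + b ^ 2) ≤ deriv arctan x := by
    intro x hx
    rw [interior_Icc] at hx
    rw [Real.deriv_arctan]
    exact one_div_le_one_div_of_le (by positivity) (by nlinarith [hx.1, hx.2])
  have := (convex_Icc a b).mul_sub_le_image_sub_of_le_deriv continuous_arctan.continuousOn
    differentiable_arctan.differentiableOn hderiv a (left_mem_Icc.2 hab) b (right_mem_Icc.2 hab) hab
  rwa [one_div_mul_eq_div] at this

lemma mul_sub_mul_rpow_le_rpow_neg_sub_rpow_neg {δ a b : ℝ} (hδ : 0 ≤ δ) (ha : 0 < a)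
    (hab : a ≤ b) : δ * (b - a) * b ^ (-(1 + δ)) ≤ a ^ (-δ) - b ^ (-δ) := by
  have hderiv :
      ∀ x ∈ interior (Icc a b), deriv (fun x : ℝ => x ^ (-δ)) x ≤ -δ * b ^ (-(1 + δ)) := by
    intro x hx
    rw [interior_Icc] at hx
    rw [Real.deriv_rpow_const, show -δ - 1 = -(1 + δ) by ring, neg_mul, neg_mul, neg_le_neg_iff]
    exact mul_le_mul_of_nonneg_left
      (rpow_le_rpow_of_nonpos (ha.trans hx.1) hx.2.le (by linarith)) hδ
  have hcont : ContinuousOn (fun x : ℝ => x ^ (-δ)) (Icc a b) :=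
    fun x hx => (continuousAt_rpow_const x _ (Or.inl (ha.trans_le hx.1).ne')).continuousWithinAt
  have hdiff : DifferentiableOn ℝ (fun x : ℝ => x ^ (-δ)) (interior (Icc a b)) := by
    rw [interior_Icc]
    exact fun x hx =>
      (differentiableAt_rpow_const_of_ne _ (ha.trans hx.1).ne').differentiableWithinAt
  have := (convex_Icc a b).image_sub_le_mul_sub_of_deriv_le hcont hdiff hderiv a
    (left_mem_Icc.2 hab) b (right_mem_Icc.2 hab) hab
  linarith

lemma sum_range_le_sub_of_le_sub_succ {f g : ℕ → ℝ} {L : ℝ} (hfg : ∀ n, f n ≤ g n - g (n + 1))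
    (hL : ∀ n, L ≤ g n) (N : ℕ) : ∑ n ∈ range N, f n ≤ g 0 - L :=
  calc ∑ n ∈ range N, f n ≤ ∑ n ∈ range N, (g n - g (n + 1)) := sum_le_sum fun n _ => hfg n
    _ = g 0 - g N := sum_range_sub' g N
    _ ≤ g 0 - L := sub_le_sub_left (hL N) _

lemma sum_range_one_div_sq_add_odd_sq_le {M : ℝ} (hM : 1 ≤ M) (N : ℕ) :
    ∑ n ∈ range N, 1 / (M ^ 2 + (2 * (n : ℝ) + 1) ^ 2) ≤ 3 * π / (8 * M) := by
  have hM0 : 0 < M := by linarith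
  set g : ℕ → ℝ := fun n => -arctan ((2 * n - 1) / M) / (2 * M)
  have step (n : ℕ) : 1 / (M ^ 2 + (2 * (n : ℝ) + 1) ^ 2) ≤ g n - g (n + 1) := by
    have h := div_one_add_sq_le_arctan_sub (a := (2 * n - 1) / M) (b := (2 * n + 1) / M)
      (by gcongr; linarith) (by rw [← neg_div]; gcongr; linarith [n.cast_nonneg (α := ℝ)])
    have hlhs : ((2 * n + 1) / M - (2 * n - 1) / M) / (1 + ((2 * n + 1) / M) ^ 2)
        = 1 / (M ^ 2 + (2 * (n : ℝ) + 1) ^ 2) * (2 * M) := by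
      field_simp
      ring
    have hrhs : g n - g (n + 1)
        = (arctan ((2 * n + 1) / M) - arctan ((2 * n - 1) / M)) / (2 * M) := by
      simp only [g]
      push_cast
      ring_nf
    rwa [hrhs, le_div_iff₀ (by positivity), ← hlhs]
  have hg (n : ℕ) : -(π / 2) / (2 * M) ≤ g n := by
    simp only [g, neg_div]
    gcongr
    exact (arctan_lt_pi_div_two _).le
  have harctan : arctan (1 / M) ≤ π / 4 :=
    arctan_one ▸ arctan_strictMono.monotone ((div_le_one hM0).2 hM)
  calc ∑ n ∈ range N, 1 / (M ^ 2 + (2 * (n : ℝ) + 1) ^ 2) ≤ g 0 - -(π / 2) / (2 * M) :=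
        sum_range_le_sub_of_le_sub_succ step hg N
    _ = (π / 2 + arctan (1 / M)) / (2 * M) := by
        simp only [g]
        rw [show (2 * ((0 : ℕ) : ℝ) - 1) / M = -(1 / M) by push_cast; ring, arctan_neg]
        ring
    _ ≤ (π / 2 + π / 4) / (2 * M) := by gcongr
    _ = 3 * π / (8 * M) := by ring

lemma sum_range_odd_rpow_le {δ : ℝ} (hδ : 0 < δ) (N : ℕ) :
    ∑ m ∈ range N, (2 * (m : ℝ) + 1) ^ (-(1 + δ)) ≤ 1 + 1 / (2 * δ) := by
  set f : ℕ → ℝ := fun m => (2 * (m : ℝ) + 1) ^ (-(1 + δ))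
  set g : ℕ → ℝ := fun m => (2 * (m : ℝ) + 1) ^ (-δ) / (2 * δ)
  have step (m : ℕ) : f (m + 1) ≤ g m - g (m + 1) := by
    have h := mul_sub_mul_rpow_le_rpow_neg_sub_rpow_neg hδ.le
      (by positivity : (0 : ℝ) < 2 * m + 1) (by linarith : 2 * (m : ℝ) + 1 ≤ 2 * m + 3)
    simp only [f, g]
    push_cast
    rw [show 2 * ((m : ℝ) + 1) + 1 = 2 * m + 3 by ring, ← sub_div, le_div_iff₀ (by positivity)]
    linarith
  calc ∑ m ∈ range N, f m ≤ ∑ m ∈ range (N + 1), f m :=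
        sum_le_sum_of_subset_of_nonneg (range_subset_range.2 N.le_succ)
          fun m _ _ => by positivity
    _ = ∑ m ∈ range N, f (m + 1) + f 0 := sum_range_succ' f N
    _ ≤ (g 0 - 0) + 1 := add_le_add (sum_range_le_sub_of_le_sub_succ step
          (fun m => by positivity) N) (by simp [f])
    _ = 1 + 1 / (2 * δ) := by simp [g]; ring

lemma norm_tsum_tsum_le {ι κ E : Type*} [SeminormedAddCommGroup E] {F : ι → κ → E}
    {a : ι → κ → ℝ} {b : ι → ℝ} (hFa : ∀ i j, ‖F i j‖ ≤ a i j) (ha : ∀ i, Summable (a i))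
    (hab : ∀ i, ∑' j, a i j ≤ b i) (hb : Summable b) : ‖∑' i, ∑' j, F i j‖ ≤ ∑' i, b i :=
  tsum_of_norm_bounded hb.hasSum fun i =>
    (tsum_of_norm_bounded (ha i).hasSum (hFa i)).trans (hab i)

lemma abs_Vterm_le {u v δ : ℝ} (hu : 0 < u) (hv : 0 ≤ v) (hδ0 : 0 ≤ δ) (hδ1 : δ ≤ 1) (m n : ℕ) :
    |Vterm u v m n| ≤ 32 / π ^ 3 * v * (π * u) ^ (1 - δ) *
      ((2 * (m : ℝ) + 1) ^ (-δ) * (1 / ((2 * (m : ℝ) + 1) ^ 2 + (2 * (n : ℝ) + 1) ^ 2))) := by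
  have hM : (0 : ℝ) < 2 * m + 1 := by positivity
  have hcoef : 0 ≤ Vcoef m n := by unfold Vcoef; positivity
  have hsin_u : |sin ((2 * m + 1) * π * u)| ≤ (2 * m + 1) ^ (1 - δ) * (π * u) ^ (1 - δ) := by
    rw [← mul_rpow hM.le (by positivity), ← mul_assoc]
    exact abs_sin_le_rpow (by positivity) (by linarith) (by linarith)
  have hsin_v : |sin ((2 * n + 1) * π * v)| ≤ (2 * n + 1) * π * v :=
    abs_sin_le_abs.trans_eq (abs_of_nonneg (by positivity))
  calc |Vterm u v m n|
      = Vcoef m n * |sin ((2 * m + 1) * π * u)| * |sin ((2 * n + 1) * π * v)| := by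
        rw [Vterm, abs_mul, abs_mul, abs_of_nonneg hcoef]
    _ ≤ Vcoef m n * ((2 * m + 1) ^ (1 - δ) * (π * u) ^ (1 - δ)) * ((2 * n + 1) * π * v) := by
        gcongr
    _ = _ := by
        rw [show 1 - δ = -δ + 1 by ring, rpow_add_one hM.ne', Vcoef]
        field_simp

lemma V_le {u v δ : ℝ} (hu : 0 < u) (hv : 0 ≤ v) (hδ : 0 < δ) (hδ1 : δ ≤ 1) :
    V u v ≤ 12 / π ^ 2 * (1 + 1 / (2 * δ)) * (π * u) ^ (1 - δ) * v := by
  set c := 32 / π ^ 3 * v * (π * u) ^ (1 - δ)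
  have hM (m : ℕ) : 1 ≤ 2 * (m : ℝ) + 1 := by linarith [m.cast_nonneg (α := ℝ)]
  have hinner (m : ℕ) := summable_of_sum_range_le (fun n => by positivity)
    (sum_range_one_div_sq_add_odd_sq_le (hM m))
  have hodd := summable_of_sum_range_le (fun m => by positivity) (sum_range_odd_rpow_le hδ)
  have hrow (m : ℕ) : ∑' n : ℕ, c * ((2 * (m : ℝ) + 1) ^ (-δ) *
      (1 / ((2 * (m : ℝ) + 1) ^ 2 + (2 * (n : ℝ) + 1) ^ 2)))
      ≤ 3 * π / 8 * c * (2 * (m : ℝ) + 1) ^ (-(1 + δ)) := by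
    have hM0 : (0 : ℝ) < 2 * m + 1 := by linarith [hM m]
    rw [tsum_mul_left, tsum_mul_left, ← mul_assoc]
    calc c * (2 * (m : ℝ) + 1) ^ (-δ) *
          ∑' n : ℕ, 1 / ((2 * (m : ℝ) + 1) ^ 2 + (2 * (n : ℝ) + 1) ^ 2)
        ≤ c * (2 * (m : ℝ) + 1) ^ (-δ) * (3 * π / (8 * (2 * m + 1))) := by
          gcongr
          exact Real.tsum_le_of_sum_range_le (fun n => by positivity)
            (sum_range_one_div_sq_add_odd_sq_le (hM m))
      _ = 3 * π / 8 * c * (2 * (m : ℝ) + 1) ^ (-(1 + δ)) := by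
          rw [show -(1 + δ) = -δ - 1 by ring, rpow_sub_one hM0.ne']
          field_simp
  have hV := norm_tsum_tsum_le (F := Vterm u v) (fun m n => abs_Vterm_le hu hv hδ.le hδ1 m n)
    (fun m => ((hinner m).mul_left _).mul_left c) hrow (hodd.mul_left _)
  calc V u v ≤ |V u v| := le_abs_self _
    _ ≤ ∑' m : ℕ, 3 * π / 8 * c * (2 * (m : ℝ) + 1) ^ (-(1 + δ)) := hV
    _ = 3 * π / 8 * c * ∑' m : ℕ, (2 * (m : ℝ) + 1) ^ (-(1 + δ)) := tsum_mul_left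
    _ ≤ 3 * π / 8 * c * (1 + 1 / (2 * δ)) := by
        gcongr
        exact Real.tsum_le_of_sum_range_le (fun m => by positivity) (sum_range_odd_rpow_le hδ)
    _ = 12 / π ^ 2 * (1 + 1 / (2 * δ)) * (π * u) ^ (1 - δ) * v := by
        simp only [c]
        field_simp
        ring

lemma one_le_log_pi : 1 ≤ log π := by
  rw [le_log_iff_exp_le pi_pos]
  linarith [exp_one_lt_d9, pi_gt_three]

lemma mul_one_add_log_one_div_le {a u : ℝ} (ha : 0 < a) (hau : a ≤ u) (hu : u ≤ 1) :
    a * (1 + log (1 / a)) ≤ u * (1 + log (1 / u)) := by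
  have hu0 : 0 < u := ha.trans_le hau
  have hsplit : log (1 / a) = log (1 / u) + log (u / a) := by
    rw [← log_mul (by positivity) (by positivity)]
    congr 1
    field_simp
  have hratio : a * log (u / a) ≤ u - a := by
    have := mul_le_mul_of_nonneg_left (log_le_sub_one_of_pos (div_pos hu0 ha)) ha.le
    rwa [mul_sub, mul_div_cancel₀ _ ha.ne', mul_one] at this
  have hlog : 0 ≤ log (1 / u) := log_nonneg (one_le_one_div hu0 hu)
  nlinarith [mul_nonneg (sub_nonneg.2 hau) hlog]

lemma one_div_four_le_mul_one_add_log_one_div {u : ℝ} (hu : exp (-1) / π ≤ u) (hu1 : u ≤ 1) :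
    1 / 4 ≤ u * (1 + log (1 / u)) := by
  have hlog : log (1 / (exp (-1) / π)) = 1 + log π := by
    rw [one_div_div, log_div pi_pos.ne' (exp_pos _).ne', log_exp]
    ring
  refine le_trans ?_ (mul_one_add_log_one_div_le (by positivity) hu hu1)
  rw [hlog, div_mul_eq_mul_div, le_div_iff₀ pi_pos, exp_neg, inv_mul_eq_div,
    le_div_iff₀ (exp_pos 1)]
  nlinarith [one_le_log_pi, exp_one_lt_d9, pi_lt_d2, pi_pos]

lemma V_le_two_mul {u v : ℝ} (hu : 0 < u) (hv : 0 ≤ v) : V u v ≤ 2 * v := by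
  have h := V_le hu hv one_pos le_rfl
  rw [sub_self, rpow_zero] at h
  have hπ : 9 ≤ π ^ 2 := by nlinarith [pi_gt_three]
  calc V u v ≤ 12 / π ^ 2 * (1 + 1 / (2 * 1)) * 1 * v := h
    _ = 18 / π ^ 2 * v := by ring
    _ ≤ 2 * v := by
        gcongr
        rw [div_le_iff₀ (by positivity)]
        linarith

lemma V_le_of_mul_lt_exp_neg_one {u v : ℝ} (hu : 0 < u) (hv : 0 ≤ v) (hsmall : π * u < exp (-1)) :
    V u v ≤ 12 * exp 1 / π * (1 - log (π * u) / 2) * u * v := by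
  have hπu : 0 < π * u := by positivity
  have hlog : log (π * u) < -1 := (log_lt_iff_lt_exp hπu).2 hsmall
  have hδ1 : -(log (π * u))⁻¹ ≤ 1 := by
    rw [neg_inv]
    exact inv_le_one_of_one_le₀ (by linarith)
  have h := V_le hu hv (neg_pos.2 (inv_lt_zero.2 (by linarith))) hδ1
  have hπu1 : π * u ≠ 1 := (hsmall.trans (exp_lt_one_iff.2 neg_one_lt_zero)).ne
  rw [sub_neg_eq_add, rpow_add hπu, rpow_one, rpow_inv_log hπu hπu1] at h
  calc V u v ≤ _ := h
    _ = _ := by field_simp; ring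

/-- For all `u ∈ (0,1]` and `v ∈ [0,1]` one has `V(u,v) ≤ 8uv(1 + log(1/u))`. -/
theorem stmt_5 (u v : ℝ) (hu : u ∈ Ioc (0:ℝ) 1) (hv : v ∈ Icc (0:ℝ) 1) :
    V u v ≤ 8 * u * v * (1 + Real.log (1 / u)) := by
  obtain ⟨hu0, hu1⟩ := hu
  obtain ⟨hv0, -⟩ := hv
  rcases le_or_gt (exp (-1) / π) u with hlarge | hsmall
  · have h := one_div_four_le_mul_one_add_log_one_div hlarge hu1
    calc V u v ≤ 2 * v := V_le_two_mul hu0 hv0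
      _ ≤ 8 * u * v * (1 + log (1 / u)) := by linarith [mul_le_mul_of_nonneg_right h hv0]
  · have hπu : π * u < exp (-1) := by rwa [lt_div_iff₀' pi_pos] at hsmall
    have hlog : log (π * u) = log π - log (1 / u) := by
      rw [log_mul pi_pos.ne' hu0.ne', one_div, log_inv, sub_neg_eq_add]
    have hlog1 : log (π * u) < -1 := (log_lt_iff_lt_exp (by positivity)).2 hπu
    have hconst : 12 * exp 1 / π ≤ 16 := by
      rw [div_le_iff₀ pi_pos]
      linarith [exp_one_lt_d9, pi_gt_three]
    calc V u v ≤ 12 * exp 1 / π * (1 - log (π * u) / 2) * u * v :=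
          V_le_of_mul_lt_exp_neg_one hu0 hv0 hπu
      _ ≤ 16 * (1 - log (π * u) / 2) * u * v := by gcongr; linarith
      _ ≤ 8 * u * v * (1 + log (1 / u)) := by
          rw [hlog]
          nlinarith [mul_nonneg (mul_nonneg hu0.le hv0) (sub_nonneg.2 one_le_log_pi)]
end
end

section
/- Let Y and Z be nonnegative integrable random variables on a probability space such that YZ is integrable and E[YZ] ≤ E[Y]·E[Z] (Y and Z are non-positively correlated). Let h : [0,∞) → [0,∞) be concave and monotone increasing, and assume Y·h(Z) is integrable. Then E[Y·h(Z)] ≤ E[Y]·h(E[Z]). -/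
open MeasureTheory Set

/-- Supporting line for a concave monotone function at an interior point `m > 0`. -/
lemma support_line_exists (h : ℝ → ℝ) (hconc : ConcaveOn ℝ (Ici 0) h)
    (hmono : MonotoneOn h (Ici 0)) {m : ℝ} (hm : 0 < m) :
    ∃ s : ℝ, 0 ≤ s ∧ ∀ z : ℝ, 0 ≤ z → h z ≤ h m + s * (z - m) := by
  set S : Set ℝ := (fun t => (h t - h m) / (t - m)) '' Ioi m with hS
  have hne : S.Nonempty := ⟨(h (m + 1) - h m) / (m + 1 - m), ⟨m + 1, by simp, rfl⟩⟩
  have hbdd : BddAbove S := by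
    refine ⟨(h m - h 0) / (m - 0), ?_⟩
    rintro x ⟨t, ht, rfl⟩
    exact hconc.slope_anti_adjacent self_mem_Ici (mem_Ici.mpr (le_of_lt (hm.trans ht))) hm ht
  refine ⟨sSup S, ?_, ?_⟩
  · have h1 : (h (m + 1) - h m) / (m + 1 - m) ≤ sSup S :=
      le_csSup hbdd ⟨m + 1, by simp, rfl⟩
    have h2 : 0 ≤ (h (m + 1) - h m) / (m + 1 - m) := by
      apply div_nonneg
      · have := hmono (le_of_lt hm) (by positivity : (0:ℝ) ≤ m + 1) (by linarith)
        linarith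
      · linarith
    linarith
  · intro z hz
    rcases lt_trichotomy z m with hlt | heq | hgt
    · -- z < m : show sSup S ≤ slope(z, m)
      have hle : sSup S ≤ (h m - h z) / (m - z) := by
        apply csSup_le hne
        rintro x ⟨t, ht, rfl⟩
        exact hconc.slope_anti_adjacent (mem_Ici.mpr hz) (mem_Ici.mpr (le_of_lt (hm.trans ht))) hlt ht
      have hmz : 0 < m - z := by linarith
      have := (le_div_iff₀ hmz).mp hle
      linarith
    · subst heq; simp
    · -- z > m : slope(m, z) ≤ sSup S
      have hle : (h z - h m) / (z - m) ≤ sSup S := le_csSup hbdd ⟨z, hgt, rfl⟩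
      have hzm : 0 < z - m := by linarith
      nlinarith [mul_le_mul_of_nonneg_right hle (le_of_lt hzm),
        div_mul_cancel₀ (h z - h m) (ne_of_gt hzm)]

/-- Let `Y, Z` be nonnegative integrable random variables with `YZ` integrable and
`E[YZ] ≤ E[Y]·E[Z]` (non-positive correlation). Let `h : [0,∞) → [0,∞)` be concave
and monotone increasing with `Y·h(Z)` integrable. Then `E[Y·h(Z)] ≤ E[Y]·h(E[Z])`. -/
theorem stmt_6 {Ω : Type*} [MeasurableSpace Ω] (P : Measure Ω) [IsProbabilityMeasure P]
    (Y Z : Ω → ℝ) (hYpos : ∀ ω, 0 ≤ Y ω) (hZpos : ∀ ω, 0 ≤ Z ω)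
    (hYint : Integrable Y P) (hZint : Integrable Z P)
    (hYZint : Integrable (fun ω => Y ω * Z ω) P)
    (hcorr : ∫ ω, Y ω * Z ω ∂P ≤ (∫ ω, Y ω ∂P) * ∫ ω, Z ω ∂P)
    (h : ℝ → ℝ) (hconc : ConcaveOn ℝ (Ici 0) h) (hmono : MonotoneOn h (Ici 0))
    (hpos : ∀ x : ℝ, 0 ≤ x → 0 ≤ h x)
    (hint : Integrable (fun ω => Y ω * h (Z ω)) P) :
    ∫ ω, Y ω * h (Z ω) ∂P ≤ (∫ ω, Y ω ∂P) * h (∫ ω, Z ω ∂P) := by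
  set m := ∫ ω, Z ω ∂P with hm
  have hmnn : 0 ≤ m := integral_nonneg hZpos
  rcases eq_or_lt_of_le hmnn with hm0 | hmpos
  · -- m = 0 : Z = 0 a.e.
    have hZ0 : Z =ᵐ[P] 0 := by
      have := (integral_eq_zero_iff_of_nonneg hZpos hZint).mp hm0.symm
      exact this
    have hcong : (fun ω => Y ω * h (Z ω)) =ᵐ[P] fun ω => Y ω * h 0 := by
      filter_upwards [hZ0] with ω hω
      simp [hω]
    rw [integral_congr_ae hcong, integral_mul_const, ← hm0]
  · obtain ⟨s, hs0, hsupp⟩ := support_line_exists h hconc hmono hmpos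
    have hptwise : ∀ ω, Y ω * h (Z ω) ≤ Y ω * h m + s * (Y ω * Z ω) - s * m * Y ω := by
      intro ω
      have := hsupp (Z ω) (hZpos ω)
      nlinarith [mul_le_mul_of_nonneg_left this (hYpos ω)]
    have hrhsint : Integrable (fun ω => Y ω * h m + s * (Y ω * Z ω) - s * m * Y ω) P :=
      ((hYint.mul_const _).add (hYZint.const_mul _)).sub (hYint.const_mul _)
    have hineq := integral_mono hint hrhsint hptwise
    have h1 : Integrable (fun ω => Y ω * h m + s * (Y ω * Z ω)) P := by
      exact (hYint.mul_const _).add (hYZint.const_mul _)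
    have heval : ∫ ω, (Y ω * h m + s * (Y ω * Z ω) - s * m * Y ω) ∂P
        = (∫ ω, Y ω ∂P) * h m + s * (∫ ω, Y ω * Z ω ∂P) - s * m * (∫ ω, Y ω ∂P) := by
      rw [integral_sub h1 (hYint.const_mul _),
        integral_add (hYint.mul_const _) (hYZint.const_mul _),
        integral_mul_const, integral_const_mul, integral_const_mul]
    rw [heval] at hineq
    nlinarith [mul_le_mul_of_nonneg_left hcorr hs0]
end
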